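/- Fix a point x ∈ ℝ^d, an answer A ∈ 𝒜, and real numbers a ≥ b such that p_f(x, A) ≥ Φ(a) and p_f(x, B) ≤ Φ(b) for every B ∈ 𝒜 with B ≠ A. Then for every δ ∈ ℝ^d with ‖δ‖₂ < σ·(a − b)/2, one has p_f(x + δ, A) > p_f(x + δ, B) for every B ≠ A; that is, the smoothed classifier g(y) = argmax_{A ∈ 𝒜} p_f(y, A) still returns A at the perturbed input x + δ. (This is the L₂ certified robustness theorem of randomized smoothing, with the certified radius R = (σ/2)(Φ⁻¹(p_A) − Φ⁻¹(p_B)) expressed via a = Φ⁻¹(p_A), b = Φ⁻¹(p_B).) -/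

import Mathlib

/-!
Write the noise as `σ • Z` with `Z` standard Gaussian, so that moving the input by `δ` shifts `Z`
by `h = σ⁻¹ • δ`. By Cameron–Martin the law of `Z + h` has density `exp (⟪h, z⟫ - ‖h‖² / 2)`
with respect to that of `Z`, an increasing function of `⟪h, z⟫`. By Neyman–Pearson, among sets of
prescribed Gaussian measure the shift moves least mass into a half-space `{⟪h, z⟫ ≤ c}` and most
into `{⟪h, z⟫ ≥ c}`, and for half-spaces everything is one-dimensional. Hence `p_A(x) ≥ Φ(a)`
forces `p_A(x + δ) ≥ Φ(a - ‖h‖)` and `p_B(x) ≤ Φ(b)` forces `p_B(x + δ) ≤ Φ(b + ‖h‖)`, and these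
bounds are strictly ordered once `‖h‖ < (a - b) / 2`.
-/

open MeasureTheory ProbabilityTheory

/-- The standard normal cumulative distribution function `Φ`. -/
noncomputable def stdNormalCDF (a : ℝ) : ℝ :=
  ((gaussianReal 0 1) (Set.Iic a)).toReal

/-- The isotropic Gaussian measure `N(x, σ²I)` on `ℝ^d`, realized as the translate by `x`
of the product of `d` copies of the real Gaussian `N(0, σ²)`. -/
noncomputable def isoGaussian (d : ℕ) (σ : ℝ) (x : EuclideanSpace ℝ (Fin d)) :
    Measure (EuclideanSpace ℝ (Fin d)) :=
  Measure.map (fun η => x + η)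
    (Measure.map (MeasurableEquiv.toLp 2 (Fin d → ℝ))
      (Measure.pi fun _ : Fin d => gaussianReal 0 (σ ^ 2).toNNReal))

/-- `p_f(x, A) = μ_x(f⁻¹({A}))`: the probability that the base classifier `f`
returns answer `A` on input `x + η`, `η ∼ N(0, σ²I)`. -/
noncomputable def classProb (d : ℕ) (σ : ℝ) {𝒜 : Type*}
    (f : EuclideanSpace ℝ (Fin d) → 𝒜) (x : EuclideanSpace ℝ (Fin d)) (A : 𝒜) : ℝ :=
  (isoGaussian d σ x (f ⁻¹' {A})).toReal

open Set Real
open scoped ENNReal NNReal RealInnerProductSpace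

lemma MeasurableEquiv.map_withDensity_comp {α β : Type*} [MeasurableSpace α] [MeasurableSpace β]
    (e : α ≃ᵐ β) (μ : Measure α) {f : β → ℝ≥0∞} (hf : Measurable f) :
    (μ.withDensity (f ∘ e)).map e = (μ.map e).withDensity f := by
  ext s hs
  rw [Measure.map_apply e.measurable hs, withDensity_apply _ (e.measurable hs),
    withDensity_apply _ hs, setLIntegral_map hs hf e.measurable, Function.comp_def]

namespace MeasureTheory

variable {α : Type*} [MeasurableSpace α] {μ : Measure α}

lemma measure_le_measure_iff_measure_diff_le [IsFiniteMeasure μ] {S H : Set α}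
    (hS : MeasurableSet S) (hH : MeasurableSet H) :
    μ S ≤ μ H ↔ μ (S \ H) ≤ μ (H \ S) := by
  rw [← measure_sdiff_add_inter S hH, ← measure_sdiff_add_inter H hS, inter_comm H S,
    ENNReal.add_le_add_iff_right (measure_ne_top μ _)]

/-- Neyman–Pearson lemma: comparing a set `S` with a level set `H` of `L` reduces to this with
`P = S \ H` and `Q = H \ S`. -/
lemma withDensity_apply_le_of_le_of_le {L : α → ℝ≥0∞} (hL : Measurable L) {K : ℝ≥0∞}
    {P Q : Set α} (hP : MeasurableSet P) (hQ : MeasurableSet Q)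
    (hLP : ∀ y ∈ P, L y ≤ K) (hLQ : ∀ y ∈ Q, K ≤ L y) (hPQ : μ P ≤ μ Q) :
    μ.withDensity L P ≤ μ.withDensity L Q :=
  calc μ.withDensity L P = ∫⁻ y in P, L y ∂μ := withDensity_apply _ hP
    _ ≤ ∫⁻ _ in P, K ∂μ := setLIntegral_mono measurable_const hLP
    _ = K * μ P := setLIntegral_const _ _
    _ ≤ K * μ Q := by gcongr
    _ = ∫⁻ _ in Q, K ∂μ := (setLIntegral_const _ _).symm
    _ ≤ ∫⁻ y in Q, L y ∂μ := setLIntegral_mono hL hLQ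
    _ = μ.withDensity L Q := (withDensity_apply _ hQ).symm

lemma Measure.pi_withDensity {ι : Type*} [Fintype ι] {β : ι → Type*}
    [∀ i, MeasurableSpace (β i)] (ν : ∀ i, Measure (β i)) [∀ i, IsProbabilityMeasure (ν i)]
    {f : ∀ i, β i → ℝ≥0∞} (hf : ∀ i, Measurable (f i))
    [∀ i, SigmaFinite ((ν i).withDensity (f i))] :
    Measure.pi (fun i ↦ (ν i).withDensity (f i))
      = (Measure.pi ν).withDensity (fun x ↦ ∏ i, f i (x i)) := by
  refine Measure.pi_eq fun s hs ↦ ?_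
  have hind : (univ.pi s).indicator (fun x ↦ ∏ i, f i (x i))
      = fun x ↦ ∏ i, (s i).indicator (f i) (x i) := by
    ext x
    by_cases hx : x ∈ univ.pi s
    · simp_all [Set.indicator_of_mem]
    · obtain ⟨i, hi⟩ : ∃ i, x i ∉ s i := by simpa using hx
      rw [indicator_of_notMem hx,
        Finset.prod_eq_zero (Finset.mem_univ i) (indicator_of_notMem hi _)]
  rw [withDensity_apply _ (.univ_pi hs), ← lintegral_indicator (.univ_pi hs), hind,
    lintegral_prod_eq_prod_lintegral_of_indepFun _ _
      (iIndepFun_pi fun i ↦ ((hf i).indicator (hs i)).aemeasurable)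
      fun i ↦ ((hf i).indicator (hs i)).comp (measurable_pi_apply i)]
  refine Finset.prod_congr rfl fun i _ ↦ ?_
  rw [withDensity_apply _ (hs i), ← lintegral_indicator (hs i)]
  exact (measurePreserving_eval ν i).lintegral_comp ((hf i).indicator (hs i))

end MeasureTheory

namespace ProbabilityTheory

section InnerProductSpace

variable {E : Type*} [NormedAddCommGroup E] [InnerProductSpace ℝ E]

noncomputable def cameronMartinDensity (h z : E) : ℝ≥0∞ :=
  ENNReal.ofReal (exp (⟪h, z⟫ - ‖h‖ ^ 2 / 2))

variable [MeasurableSpace E] [BorelSpace E]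

lemma measurable_cameronMartinDensity (h : E) : Measurable (cameronMartinDensity h) := by
  unfold cameronMartinDensity
  fun_prop

variable [FiniteDimensional ℝ E]

lemma stdGaussian_map_inner {u : E} (hu : ‖u‖ = 1) :
    (stdGaussian E).map (⟪u, ·⟫) = gaussianReal 0 1 := by
  have h := IsGaussian.map_eq_gaussianReal (μ := stdGaussian E) (innerSL ℝ u)
  rw [integral_strongDual_stdGaussian, variance_dual_stdGaussian, innerSL_apply_norm, hu] at h
  simpa using h

lemma stdGaussian_setOf_inner_le {u : E} (hu : u ≠ 0) (s : ℝ) :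
    stdGaussian E {z | ⟪u, z⟫ ≤ s} = gaussianReal 0 1 (Iic (s / ‖u‖)) := by
  have hu' : 0 < ‖u‖ := norm_pos_iff.2 hu
  have hset : {z | ⟪u, z⟫ ≤ s} = (⟪‖u‖⁻¹ • u, ·⟫) ⁻¹' Iic (s / ‖u‖) := by
    ext z
    simp [real_inner_smul_left, inv_mul_eq_div, div_le_div_iff_of_pos_right hu']
  rw [hset, ← Measure.map_apply (by fun_prop) measurableSet_Iic, stdGaussian_map_inner]
  rw [norm_smul, norm_inv, norm_norm, inv_mul_cancel₀ hu'.ne']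

lemma stdGaussian_map_add_setOf_inner_le {u : E} (hu : u ≠ 0) (h : E) (s : ℝ) :
    (stdGaussian E).map (· + h) {z | ⟪u, z⟫ ≤ s}
      = gaussianReal 0 1 (Iic ((s - ⟪u, h⟫) / ‖u‖)) := by
  rw [Measure.map_apply (measurable_add_const h) (measurableSet_le (by fun_prop) (by fun_prop)),
    ← stdGaussian_setOf_inner_le hu]
  congr 1 with z
  simp [inner_add_right, le_sub_iff_add_le]

end InnerProductSpace

lemma gaussianReal_eq_withDensity (c : ℝ) :
    gaussianReal c 1 = (gaussianReal 0 1).withDensity (cameronMartinDensity c) := by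
  rw [gaussianReal_of_var_ne_zero _ one_ne_zero, gaussianReal_of_var_ne_zero _ one_ne_zero,
    ← withDensity_mul _ (measurable_gaussianPDF 0 1) (measurable_cameronMartinDensity c)]
  congr 1 with t
  rw [Pi.mul_apply, gaussianPDF_def, gaussianPDF_def, cameronMartinDensity,
    ← ENNReal.ofReal_mul (gaussianPDFReal_nonneg 0 1 t)]
  simp only [gaussianPDFReal_def, mul_assoc, ← exp_add]
  congr 3
  simp only [RCLike.inner_apply, conj_trivial, Real.norm_eq_abs, sq_abs, NNReal.coe_one]
  ring

lemma stdGaussian_map_add {ι : Type*} [Fintype ι] (h : EuclideanSpace ℝ ι) :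
    (stdGaussian (EuclideanSpace ℝ ι)).map (· + h)
      = (stdGaussian (EuclideanSpace ℝ ι)).withDensity (cameronMartinDensity h) := by
  have hshift : (· + h) ∘ WithLp.toLp 2 = WithLp.toLp 2 ∘ fun (z : ι → ℝ) i ↦ z i + h i := by
    ext z i
    simp
  have hdens : (fun z : ι → ℝ ↦ ∏ i, cameronMartinDensity (h i) (z i))
      = cameronMartinDensity h ∘ MeasurableEquiv.toLp 2 (ι → ℝ) := by
    ext z
    simp only [Function.comp_apply, cameronMartinDensity,
      ← ENNReal.ofReal_prod_of_nonneg fun i _ ↦ (exp_pos _).le, ← exp_sum]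
    congr 2
    simp [PiLp.inner_apply, EuclideanSpace.real_norm_sq_eq, Finset.sum_sub_distrib,
      Finset.sum_div]
  have (i : ι) : SigmaFinite ((gaussianReal 0 1).withDensity (cameronMartinDensity (h i))) := by
    rw [← gaussianReal_eq_withDensity]
    infer_instance
  rw [← map_pi_eq_stdGaussian, Measure.map_map (measurable_add_const h) (by fun_prop), hshift,
    ← Measure.map_map (by fun_prop) (by fun_prop),
    Measure.pi_map_pi fun i ↦ (measurable_add_const _).aemeasurable]
  simp_rw [gaussianReal_map_add_const, zero_add]
  rw [funext fun i ↦ gaussianReal_eq_withDensity (h i),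
    Measure.pi_withDensity _ fun i ↦ measurable_cameronMartinDensity _, hdens,
    ← MeasurableEquiv.coe_toLp,
    MeasurableEquiv.map_withDensity_comp _ _ (measurable_cameronMartinDensity h)]

instance isProbabilityMeasure_withDensity_cameronMartinDensity {ι : Type*} [Fintype ι]
    (h : EuclideanSpace ℝ ι) :
    IsProbabilityMeasure
      ((stdGaussian (EuclideanSpace ℝ ι)).withDensity (cameronMartinDensity h)) := by
  rw [← stdGaussian_map_add]
  infer_instance

end ProbabilityTheory

lemma stdNormalCDF_strictMono : StrictMono stdNormalCDF := by
  intro s t hst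
  have := (gaussianReal_absolutelyContinuous' 0 one_ne_zero).isOpenPosMeasure
  rw [stdNormalCDF, stdNormalCDF,
    ENNReal.toReal_lt_toReal (measure_ne_top _ _) (measure_ne_top _ _),
    ← Iic_union_Ioc_eq_Iic hst.le, measure_union (Iic_disjoint_Ioc le_rfl) measurableSet_Ioc]
  exact ENNReal.lt_add_right (measure_ne_top _ _)
    ((Measure.measure_Ioo_pos _ |>.2 hst).trans_le (measure_mono Ioo_subset_Ioc_self)).ne'

section Bounds

variable {ι : Type*} [Fintype ι] {S : Set (EuclideanSpace ℝ ι)}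

lemma stdNormalCDF_sub_norm_le_stdGaussian_map_add (hS : MeasurableSet S) {a : ℝ}
    (ha : stdNormalCDF a ≤ (stdGaussian _ S).toReal) (h : EuclideanSpace ℝ ι) :
    stdNormalCDF (a - ‖h‖) ≤ ((stdGaussian _).map (· + h) S).toReal := by
  rcases eq_or_ne h 0 with rfl | hh
  · simpa using ha
  have hpos : 0 < ‖h‖ := norm_pos_iff.2 hh
  set H := {z : EuclideanSpace ℝ ι | ⟪h, z⟫ ≤ ‖h‖ * a}
  have hH : MeasurableSet H := measurableSet_le (by fun_prop) (by fun_prop)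
  have hγH : stdGaussian _ H = gaussianReal 0 1 (Iic a) := by
    rw [stdGaussian_setOf_inner_le hh]
    field_simp
  have hνH : (stdGaussian _).map (· + h) H = gaussianReal 0 1 (Iic (a - ‖h‖)) := by
    rw [stdGaussian_map_add_setOf_inner_le hh, real_inner_self_eq_norm_sq]
    congr 2
    field_simp
  rw [stdNormalCDF, ENNReal.toReal_le_toReal (measure_ne_top _ _) (measure_ne_top _ _)] at ha ⊢
  rw [← hνH, stdGaussian_map_add, measure_le_measure_iff_measure_diff_le hH hS]
  -- `K` is the value of the density on the hyperplane bounding `H`.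
  refine withDensity_apply_le_of_le_of_le (measurable_cameronMartinDensity h)
    (K := ENNReal.ofReal (exp (‖h‖ * a - ‖h‖ ^ 2 / 2))) (hH.diff hS) (hS.diff hH)
    (fun z hz ↦ ?_) (fun z hz ↦ ?_) ((measure_le_measure_iff_measure_diff_le hH hS).1 (hγH ▸ ha))
  · unfold cameronMartinDensity
    gcongr
    exact hz.1
  · unfold cameronMartinDensity
    gcongr
    exact (not_le.1 hz.2).le

lemma stdGaussian_map_add_le_stdNormalCDF_add_norm (hS : MeasurableSet S) {b : ℝ}
    (hb : (stdGaussian _ S).toReal ≤ stdNormalCDF b) (h : EuclideanSpace ℝ ι) :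
    ((stdGaussian _).map (· + h) S).toReal ≤ stdNormalCDF (b + ‖h‖) := by
  rcases eq_or_ne h 0 with rfl | hh
  · simpa using hb
  have hpos : 0 < ‖h‖ := norm_pos_iff.2 hh
  set H := {z : EuclideanSpace ℝ ι | ⟪-h, z⟫ ≤ ‖h‖ * b}
  have hH : MeasurableSet H := measurableSet_le (by fun_prop) (by fun_prop)
  have hγH : stdGaussian _ H = gaussianReal 0 1 (Iic b) := by
    rw [stdGaussian_setOf_inner_le (neg_ne_zero.2 hh), norm_neg]
    field_simp
  have hνH : (stdGaussian _).map (· + h) H = gaussianReal 0 1 (Iic (b + ‖h‖)) := by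
    rw [stdGaussian_map_add_setOf_inner_le (neg_ne_zero.2 hh), inner_neg_left,
      real_inner_self_eq_norm_sq, norm_neg]
    congr 2
    field_simp
    ring
  rw [stdNormalCDF, ENNReal.toReal_le_toReal (measure_ne_top _ _) (measure_ne_top _ _)] at hb ⊢
  rw [← hνH, stdGaussian_map_add, measure_le_measure_iff_measure_diff_le hS hH]
  refine withDensity_apply_le_of_le_of_le (measurable_cameronMartinDensity h)
    (K := ENNReal.ofReal (exp (-(‖h‖ * b) - ‖h‖ ^ 2 / 2))) (hS.diff hH) (hH.diff hS)
    (fun z hz ↦ ?_) (fun z hz ↦ ?_) ((measure_le_measure_iff_measure_diff_le hS hH).1 (hγH ▸ hb))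
  · unfold cameronMartinDensity
    gcongr
    have : ‖h‖ * b < -⟪h, z⟫ := by simpa [H, inner_neg_left] using hz.2
    linarith
  · unfold cameronMartinDensity
    gcongr
    have : -⟪h, z⟫ ≤ ‖h‖ * b := by simpa [H, inner_neg_left] using hz.1
    linarith

end Bounds

lemma isoGaussian_eq_map_stdGaussian (d : ℕ) (σ : ℝ) (x : EuclideanSpace ℝ (Fin d)) :
    isoGaussian d σ x = (stdGaussian (EuclideanSpace ℝ (Fin d))).map (fun z ↦ x + σ • z) := by
  have hcoord : (fun _ : Fin d ↦ gaussianReal 0 (σ ^ 2).toNNReal)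
      = fun _ ↦ (gaussianReal 0 1).map (σ * ·) := by
    ext1
    rw [gaussianReal_map_const_mul, mul_zero]
    congr
    ext
    simp [sq_nonneg]
  rw [isoGaussian, hcoord, ← Measure.pi_map_pi fun _ ↦ (measurable_const_mul σ).aemeasurable,
    Measure.map_map (by fun_prop) (by fun_prop), Measure.map_map (by fun_prop) (by fun_prop),
    ← map_pi_eq_stdGaussian, Measure.map_map (by fun_prop) (by fun_prop)]
  congr 1

lemma isoGaussian_add_eq_map_stdGaussian {σ : ℝ} (hσ : σ ≠ 0) {d : ℕ}
    (x δ : EuclideanSpace ℝ (Fin d)) :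
    isoGaussian d σ (x + δ) = ((stdGaussian (EuclideanSpace ℝ (Fin d))).map (· + σ⁻¹ • δ)).map
      (fun z ↦ x + σ • z) := by
  rw [isoGaussian_eq_map_stdGaussian, Measure.map_map (by fun_prop) (by fun_prop)]
  congr 1
  funext z
  simp only [Function.comp_apply, smul_add, smul_inv_smul₀ hσ]
  abel

theorem randomized_smoothing_certified_robustness_general
    (d : ℕ) (σ : ℝ) (hσ : 0 < σ)
    {𝒜 : Type*}
    (f : EuclideanSpace ℝ (Fin d) → 𝒜)
    (hf : ∀ A : 𝒜, MeasurableSet (f ⁻¹' {A}))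
    (x : EuclideanSpace ℝ (Fin d)) (A : 𝒜) (a b : ℝ)
    (hA : stdNormalCDF a ≤ classProb d σ f x A)
    (hB : ∀ B : 𝒜, B ≠ A → classProb d σ f x B ≤ stdNormalCDF b) :
    ∀ δ : EuclideanSpace ℝ (Fin d), ‖δ‖ < σ * (a - b) / 2 →
      ∀ B : 𝒜, B ≠ A → classProb d σ f (x + δ) B < classProb d σ f (x + δ) A := by
  intro δ hδ B hBA
  let S (C : 𝒜) := (fun z ↦ x + σ • z) ⁻¹' (f ⁻¹' {C})
  have hS (C : 𝒜) : MeasurableSet (S C) := (hf C).preimage (by fun_prop)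
  have hx (C : 𝒜) : classProb d σ f x C = (stdGaussian _ (S C)).toReal := by
    rw [classProb, isoGaussian_eq_map_stdGaussian, Measure.map_apply (by fun_prop) (hf C)]
  have hxδ (C : 𝒜) :
      classProb d σ f (x + δ) C = ((stdGaussian _).map (· + σ⁻¹ • δ) (S C)).toReal := by
    rw [classProb, isoGaussian_add_eq_map_stdGaussian hσ.ne',
      Measure.map_apply (by fun_prop) (hf C)]
  have hh : ‖σ⁻¹ • δ‖ < (a - b) / 2 := by
    rw [norm_smul, norm_inv, norm_of_nonneg hσ.le, inv_mul_lt_iff₀ hσ]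
    linarith
  rw [hxδ, hxδ]
  calc _ ≤ stdNormalCDF (b + ‖σ⁻¹ • δ‖) :=
        stdGaussian_map_add_le_stdNormalCDF_add_norm (hS B) (hx B ▸ hB B hBA) _
    _ < stdNormalCDF (a - ‖σ⁻¹ • δ‖) := stdNormalCDF_strictMono (by linarith)
    _ ≤ _ := stdNormalCDF_sub_norm_le_stdGaussian_map_add (hS A) (hx A ▸ hA) _

/-- L₂ certified robustness of randomized smoothing (Cohen et al., 2019):
if `p_f(x, A) ≥ Φ(a)` and `p_f(x, B) ≤ Φ(b)` for all `B ≠ A` with `a ≥ b`, then for every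
`δ` with `‖δ‖₂ < σ(a − b)/2` the smoothed classifier still returns `A` at `x + δ`,
i.e. `p_f(x + δ, A) > p_f(x + δ, B)` for every `B ≠ A`. -/
theorem randomized_smoothing_certified_robustness
    (d : ℕ) (hd : 1 ≤ d) (σ : ℝ) (hσ : 0 < σ)
    {𝒜 : Type*} [Fintype 𝒜] [Nonempty 𝒜]
    (f : EuclideanSpace ℝ (Fin d) → 𝒜)
    (hf : ∀ A : 𝒜, MeasurableSet (f ⁻¹' {A}))
    (x : EuclideanSpace ℝ (Fin d)) (A : 𝒜) (a b : ℝ) (hab : b ≤ a)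
    (hA : stdNormalCDF a ≤ classProb d σ f x A)
    (hB : ∀ B : 𝒜, B ≠ A → classProb d σ f x B ≤ stdNormalCDF b) :
    ∀ δ : EuclideanSpace ℝ (Fin d), ‖δ‖ < σ * (a - b) / 2 →
      ∀ B : 𝒜, B ≠ A → classProb d σ f (x + δ) B < classProb d σ f (x + δ) A :=
  randomized_smoothing_certified_robustness_general d σ hσ f hf x A a b hA hB
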